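/- Let Φ(ξ,η) = √(|ξ|²+1) − √(2|ξ−η|²+4) + √(|η|²+1). For every real l ≥ 1000, every λ ∈ [0, 0.99], and all ξ, η ∈ ℝ² with |ξ| ≤ 2^{−3l+1} and 2^{−λl−1} ≤ |η| ≤ 2^{−λl+1}, the gradient ∇_ηΦ(ξ,η) = 2(ξ−η)/√(2|ξ−η|²+4) + η/√(|η|²+1) is nonzero. (This is Lemma 2.1: on the frequency region |ξ| ∼ 2^{−3l}, |η| ∼ 2^{−λl} with 0 ≤ λ ≤ 1 − δ, δ = 0.01, the rescaled phase has no critical point in η.) -/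
import Mathlib
set_option maxHeartbeats 1600000

private lemma aux_no_crit (l lam x s r : ℝ) (hl : 1000 ≤ l) (hlam0 : 0 ≤ lam)
    (hlam1 : lam ≤ 0.99) (hx0 : 0 ≤ x) (hr0 : 0 ≤ r)
    (hξ : x ≤ (2 : ℝ) ^ (-3 * l + 1))
    (hη1 : (2 : ℝ) ^ (-lam * l - 1) ≤ s) (hη2 : s ≤ (2 : ℝ) ^ (-lam * l + 1))
    (hrs : r ≤ s + x)
    (heq : (2 / Real.sqrt (2 * r ^ 2 + 4)) * x
      = |2 / Real.sqrt (2 * r ^ 2 + 4) - 1 / Real.sqrt (s ^ 2 + 1)| * s) : False := by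
  set A := Real.sqrt (2 * r ^ 2 + 4) with hAdef
  set B := Real.sqrt (s ^ 2 + 1) with hBdef
  clear_value A B
  have hs0 : 0 < s := lt_of_lt_of_le (Real.rpow_pos_of_pos two_pos _) hη1
  have hll0 : 0 ≤ lam * l := mul_nonneg hlam0 (by linarith)
  have hs2 : s ≤ 2 := by
    calc s ≤ (2:ℝ) ^ (-lam * l + 1) := hη2
    _ ≤ (2:ℝ) ^ (1:ℝ) := Real.rpow_le_rpow_of_exponent_le one_le_two (by linarith)
    _ = 2 := Real.rpow_one 2
  have hxs : x ≤ s / 8 := by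
    have h1 : (2:ℝ) ^ (-3 * l + 1) ≤ (2:ℝ) ^ (-lam * l - 1 - 3) :=
      Real.rpow_le_rpow_of_exponent_le one_le_two (by nlinarith)
    have h2 : (2:ℝ) ^ (-lam * l - 1 - 3) = (2:ℝ) ^ (-lam * l - 1) / 8 := by
      rw [Real.rpow_sub two_pos, show (3:ℝ) = ((3:ℕ):ℝ) by norm_num, Real.rpow_natCast]
      norm_num
    have h3 : x ≤ (2:ℝ) ^ (-lam * l - 1) / 8 := by rw [← h2]; linarith [hξ, h1]
    linarith [hη1]
  have hsqrt4 : Real.sqrt 4 = 2 := by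
    rw [show (4:ℝ) = 2 ^ 2 by norm_num, Real.sqrt_sq (by norm_num : (0:ℝ) ≤ 2)]
  have hA2 : 2 ≤ A := by
    rw [← hsqrt4, hAdef]
    exact Real.sqrt_le_sqrt (by nlinarith)
  have hB1 : 1 ≤ B := by
    rw [show (1:ℝ) = Real.sqrt 1 by simp, hBdef]
    exact Real.sqrt_le_sqrt (by nlinarith)
  have hA0 : 0 < A := by linarith
  have hB0 : 0 < B := by linarith
  have hr3 : r ≤ 3 := by linarith
  have hA5 : A ≤ 5 := by
    rw [show (5:ℝ) = Real.sqrt 25 by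
      rw [show (25:ℝ) = 5 ^ 2 by norm_num, Real.sqrt_sq (by norm_num : (0:ℝ) ≤ 5)], hAdef]
    exact Real.sqrt_le_sqrt (by nlinarith)
  have hB3 : B ≤ 3 := by
    rw [show (3:ℝ) = Real.sqrt 9 by
      rw [show (9:ℝ) = 3 ^ 2 by norm_num, Real.sqrt_sq (by norm_num : (0:ℝ) ≤ 3)], hBdef]
    exact Real.sqrt_le_sqrt (by nlinarith)
  have hA2sq : A ^ 2 = 2 * r ^ 2 + 4 := by
    rw [hAdef]; exact Real.sq_sqrt (by positivity)
  have hB2sq : B ^ 2 = s ^ 2 + 1 := by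
    rw [hBdef]; exact Real.sq_sqrt (by positivity)
  have hkey : s ^ 2 / 2 ≤ 2 * s ^ 2 - r ^ 2 := by
    have h1 : r * r ≤ (s + x) * (s + x) := mul_self_le_mul_self hr0 hrs
    have h2 : s * x ≤ s * (s / 8) := mul_le_mul_of_nonneg_left hxs hs0.le
    have h3 : x * x ≤ (s / 8) * (s / 8) := mul_self_le_mul_self hx0 hxs
    nlinarith [h1, h2, h3]
  have hABpos : 0 < 2 * B + A := by linarith
  have hprod : s ^ 2 ≤ 4 * B ^ 2 - A ^ 2 := by linarith [hkey, hA2sq, hB2sq]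
  have ht0 : 0 < 2 * B - A := by
    have h1 : A ^ 2 < (2 * B) ^ 2 := by nlinarith [pow_pos hs0 2]
    have h2 : A < 2 * B := lt_of_pow_lt_pow_left₀ 2 (by linarith) h1
    linarith
  have h2BA : s ^ 2 / 11 ≤ 2 * B - A := by
    have h1 : (2 * B - A) * (2 * B + A) ≤ (2 * B - A) * 11 :=
      mul_le_mul_of_nonneg_left (by linarith) ht0.le
    nlinarith [hprod, h1]
  have hab : s ^ 2 / 165 ≤ 2 / A - 1 / B := by
    have he : 2 / A - 1 / B = (2 * B - A) / (A * B) := by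
      rw [div_sub_div _ _ hA0.ne' hB0.ne', mul_one]
    rw [he, le_div_iff₀ (by positivity)]
    have hAB15 : A * B ≤ 15 := by nlinarith [hA2, hB1, hA5, hB3]
    have h1 : s ^ 2 / 165 * (A * B) ≤ s ^ 2 / 165 * 15 :=
      mul_le_mul_of_nonneg_left hAB15 (by positivity)
    linarith [h2BA, h1]
  rw [abs_of_pos (by nlinarith [hab, pow_pos hs0 2] : (0:ℝ) < 2 / A - 1 / B)] at heq
  have ha1 : 2 / A ≤ 1 := by rw [div_le_one hA0]; linarith
  have hs3 : s ^ 3 / 165 ≤ x := by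
    have h2 : (2 / A - 1 / B) * s ≤ x := by
      have h3 : (2 / A) * x ≤ 1 * x := mul_le_mul_of_nonneg_right ha1 hx0
      linarith [heq]
    have h4 : s ^ 2 / 165 * s ≤ (2 / A - 1 / B) * s :=
      mul_le_mul_of_nonneg_right hab hs0.le
    nlinarith [h4, h2]
  have e1 : (2:ℝ) ^ (-3 * l + 9) ≤ (2:ℝ) ^ ((-lam * l - 1) * 3) :=
    Real.rpow_le_rpow_of_exponent_le one_le_two (by nlinarith)
  have e2 : (2:ℝ) ^ ((-lam * l - 1) * 3) = ((2:ℝ) ^ (-lam * l - 1)) ^ (3:ℕ) := by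
    rw [Real.rpow_mul (by norm_num : (0:ℝ) ≤ 2), show ((3:ℝ)) = ((3:ℕ):ℝ) by norm_num,
      Real.rpow_natCast]
  have e3 : ((2:ℝ) ^ (-lam * l - 1)) ^ (3:ℕ) ≤ s ^ 3 :=
    pow_le_pow_left₀ (le_of_lt (Real.rpow_pos_of_pos two_pos _)) hη1 3
  have e5 : (165:ℝ) * (2:ℝ) ^ (-3 * l + 1) < (2:ℝ) ^ (-3 * l + 9) := by
    have h8 : (2:ℝ) ^ (-3 * l + 9) = (2:ℝ) ^ ((8:ℕ):ℝ) * (2:ℝ) ^ (-3 * l + 1) := by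
      rw [← Real.rpow_add two_pos]
      congr 1
      push_cast
      ring
    rw [h8, Real.rpow_natCast]
    have h9 : (0:ℝ) < (2:ℝ) ^ (-3 * l + 1) := Real.rpow_pos_of_pos two_pos _
    nlinarith
  have e6 : ((2:ℝ) ^ (-lam * l - 1)) ^ (3:ℕ) ≤ s ^ 3 := e3
  have e7 : (2:ℝ) ^ (-3 * l + 9) ≤ s ^ 3 := by
    calc (2:ℝ) ^ (-3 * l + 9) ≤ (2:ℝ) ^ ((-lam * l - 1) * 3) := e1
    _ = ((2:ℝ) ^ (-lam * l - 1)) ^ (3:ℕ) := e2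
    _ ≤ s ^ 3 := e3
  linarith [hs3, e5, e7, mul_le_mul_of_nonneg_left hξ (by norm_num : (0:ℝ) ≤ 165)]

noncomputable def gradPhi (ξ η : EuclideanSpace ℝ (Fin 2)) : EuclideanSpace ℝ (Fin 2) :=
  (2 / Real.sqrt (2 * ‖ξ - η‖ ^ 2 + 4)) • (ξ - η) + (1 / Real.sqrt (‖η‖ ^ 2 + 1)) • η

theorem no_critical_point_low_eta :
    ∀ l : ℝ, 1000 ≤ l → ∀ lam : ℝ, 0 ≤ lam → lam ≤ 0.99 →
      ∀ ξ η : EuclideanSpace ℝ (Fin 2),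
        ‖ξ‖ ≤ (2 : ℝ) ^ (-3 * l + 1) →
        (2 : ℝ) ^ (-lam * l - 1) ≤ ‖η‖ → ‖η‖ ≤ (2 : ℝ) ^ (-lam * l + 1) →
        gradPhi ξ η ≠ 0 := by
  intro l hl lam hlam0 hlam1 ξ η hξ hη1 hη2 h0
  unfold gradPhi at h0
  set A := Real.sqrt (2 * ‖ξ - η‖ ^ 2 + 4) with hAdef
  set B := Real.sqrt (‖η‖ ^ 2 + 1) with hBdef
  clear_value A B
  have h1 : (2 / A) • (ξ - η) = -((1 / B) • η) := eq_neg_of_add_eq_zero_left h0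
  have hv : (2 / A) • ξ = (2 / A - 1 / B) • η := by
    calc (2 / A) • ξ = (2 / A) • (ξ - η) + (2 / A) • η := by module
    _ = -((1 / B) • η) + (2 / A) • η := by rw [h1]
    _ = (2 / A - 1 / B) • η := by module
  have hA0' : 0 ≤ 2 / A := by
    rw [hAdef]; positivity
  have hn := congrArg (fun v : EuclideanSpace ℝ (Fin 2) => ‖v‖) hv
  simp only [norm_smul, Real.norm_eq_abs, abs_of_nonneg hA0'] at hn
  rw [hAdef, hBdef] at hn
  exact aux_no_crit l lam ‖ξ‖ ‖η‖ ‖ξ - η‖ hl hlam0 hlam1 (norm_nonneg _) (norm_nonneg _)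
    hξ hη1 hη2 (by calc ‖ξ - η‖ ≤ ‖ξ‖ + ‖η‖ := norm_sub_le ξ η
                   _ = ‖η‖ + ‖ξ‖ := by ring) hn
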